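/- arXiv:2109.13329 — 2 statements merged into one kernel-verified Lean document; each statement's English description precedes it below -/
import Mathlib

section
/- Let a, b, c ∈ Z satisfy m ∤ a, m ∤ b, m ∤ c, and m | a+b+c, and let α = θ_m(a) + θ_m(b) + θ_m(c) - N_m. Then (1 + σ_{-1})·α = N_m; consequently, exactly half of the coefficients of α (as an element of Z[G_m]) are zero and the other half equal one. -/
open scoped BigOperators

noncomputable def theta (m : ℕ) [NeZero m] (a : ℤ) : MonoidAlgebra ℚ (ZMod m)ˣ :=
  ∑ s : (ZMod m)ˣ, MonoidAlgebra.single s⁻¹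
    (Int.fract ((-(a * ((s : ZMod m).val : ℤ)) : ℤ) / (m : ℚ)))

noncomputable def Nelt (m : ℕ) [NeZero m] : MonoidAlgebra ℚ (ZMod m)ˣ :=
  ∑ τ : (ZMod m)ˣ, MonoidAlgebra.single τ (1 : ℚ)

/-- An element of the group ring is short if all its coefficients lie in `{0, 1}`
(in particular it lies in `ℤ[G_m]`). -/
def IsShort {m : ℕ} [NeZero m] (x : MonoidAlgebra ℚ (ZMod m)ˣ) : Prop :=
  ∀ σ : (ZMod m)ˣ, x.coeff σ = 0 ∨ x.coeff σ = 1

lemma sum_single_apply {G : Type*} [Group G] [Fintype G] (f : G → ℚ) (σ : G) :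
    ((∑ s : G, MonoidAlgebra.single s (f s)) : MonoidAlgebra ℚ G).coeff σ = f σ := by
  classical
  rw [MonoidAlgebra.coeff_sum, Finsupp.finset_sum_apply]
  simp [MonoidAlgebra.coeff_single, Finsupp.single_apply]

lemma sum_single_inv_apply {G : Type*} [Group G] [Fintype G] (f : G → ℚ) (σ : G) :
    ((∑ s : G, MonoidAlgebra.single s⁻¹ (f s)) : MonoidAlgebra ℚ G).coeff σ = f σ⁻¹ := by
  classical
  rw [MonoidAlgebra.coeff_sum, Finsupp.finset_sum_apply]
  simp [MonoidAlgebra.coeff_single, Finsupp.single_apply, inv_eq_iff_eq_inv]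

lemma fract_congr (m : ℕ) [NeZero m] {k k' : ℤ} (h : (m:ℤ) ∣ (k - k')) :
    Int.fract ((k:ℚ)/(m:ℚ)) = Int.fract ((k':ℚ)/(m:ℚ)) := by
  obtain ⟨t, ht⟩ := h
  have hm : (m:ℚ) ≠ 0 := Nat.cast_ne_zero.2 (NeZero.ne m)
  have hk : (k:ℚ) = (k':ℚ) + m * t := by
    have : k = k' + m * t := by linarith
    exact_mod_cast congrArg (Int.cast : ℤ → ℚ) this
  rw [hk, add_div, mul_div_cancel_left₀ _ hm, Int.fract_add_intCast]

lemma fract_ne_zero (m : ℕ) [NeZero m] {k : ℤ} (h : ¬ (m:ℤ) ∣ k) :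
    Int.fract ((k:ℚ)/(m:ℚ)) ≠ 0 := by
  rw [Int.fract_div_intCast_eq_div_intCast_mod]
  have h1 : k % (m:ℤ) ≠ 0 := fun h0 => h (Int.dvd_of_emod_eq_zero h0)
  have hm : (m:ℚ) ≠ 0 := Nat.cast_ne_zero.2 (NeZero.ne m)
  exact div_ne_zero (by exact_mod_cast h1) hm

lemma val_pair (m : ℕ) [NeZero m] (σ : (ZMod m)ˣ) :
    (m:ℤ) ∣ ((((-σ : (ZMod m)ˣ) : ZMod m).val : ℤ) + (((σ : (ZMod m)ˣ) : ZMod m).val : ℤ)) := by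
  rw [← ZMod.intCast_zmod_eq_zero_iff_dvd]
  push_cast
  simp [ZMod.natCast_val, ZMod.cast_id]

lemma not_dvd_mul_val (m : ℕ) [NeZero m] {x : ℤ} (hx : ¬ (m:ℤ) ∣ x) (σ : (ZMod m)ˣ) :
    ¬ (m:ℤ) ∣ x * (((σ : (ZMod m)ˣ) : ZMod m).val : ℤ) := by
  intro h
  apply hx
  rw [← ZMod.intCast_zmod_eq_zero_iff_dvd] at h ⊢
  push_cast at h
  rw [ZMod.natCast_val, ZMod.cast_id] at h
  exact (Units.mul_left_eq_zero σ).mp h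

theorem stmt7 (m : ℕ) [NeZero m] (hm : 1 < m) (hm4 : m % 4 ≠ 2) (a b c : ℤ)
    (ha : ¬ ((m : ℤ) ∣ a)) (hb : ¬ ((m : ℤ) ∣ b)) (hc : ¬ ((m : ℤ) ∣ c))
    (habc : (m : ℤ) ∣ (a + b + c)) :
    (1 + MonoidAlgebra.single (-1 : (ZMod m)ˣ) (1 : ℚ)) *
        (theta m a + theta m b + theta m c - Nelt m) = Nelt m ∧
    (Finset.univ.filter
        (fun σ : (ZMod m)ˣ => (theta m a + theta m b + theta m c - Nelt m).coeff σ = 0)).card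
      = Fintype.card (ZMod m)ˣ / 2 ∧
    (Finset.univ.filter
        (fun σ : (ZMod m)ˣ => (theta m a + theta m b + theta m c - Nelt m).coeff σ = 1)).card
      = Fintype.card (ZMod m)ˣ / 2 := by
  classical
  set α := theta m a + theta m b + theta m c - Nelt m with hαdef
  set F : ℤ → (ZMod m)ˣ → ℚ := fun x u =>
    Int.fract (((-(x * (((u : ZMod m)).val : ℤ)) : ℤ) : ℚ) / (m : ℚ)) with hF
  have hθ : ∀ (x : ℤ) (σ : (ZMod m)ˣ), (theta m x).coeff σ = F x σ⁻¹ := by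
    intro x σ
    rw [theta, sum_single_inv_apply (fun s => F x s) σ]
  have hN : ∀ σ : (ZMod m)ˣ, (Nelt m).coeff σ = 1 := by
    intro σ
    rw [Nelt, sum_single_apply (fun _ => (1:ℚ)) σ]
  have happ : ∀ σ : (ZMod m)ˣ, α.coeff σ = F a σ⁻¹ + F b σ⁻¹ + F c σ⁻¹ - 1 := by
    intro σ
    simp only [hαdef, MonoidAlgebra.coeff_sub, MonoidAlgebra.coeff_add, Finsupp.sub_apply, Finsupp.add_apply, hθ, hN]
  -- pairing for F
  have hpair : ∀ x : ℤ, ¬ ((m:ℤ) ∣ x) → ∀ u : (ZMod m)ˣ, F x u + F x (-u) = 1 := by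
    intro x hx u
    have h1 : F x (-u) = Int.fract (((x * (((u : ZMod m)).val : ℤ) : ℤ) : ℚ) / (m : ℚ)) := by
      rw [hF]
      refine fract_congr m ?_
      have := val_pair m u
      obtain ⟨t, ht⟩ := this
      exact ⟨-x * t, by push_cast; linear_combination (-x) * ht⟩
    have hnd := not_dvd_mul_val m hx u
    have h0 : Int.fract (((x * (((u : ZMod m)).val : ℤ) : ℤ) : ℚ) / (m : ℚ)) ≠ 0 :=
      fract_ne_zero m hnd
    have h2 : F x u = Int.fract (-(((x * (((u : ZMod m)).val : ℤ) : ℤ) : ℚ) / (m : ℚ))) := by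
      rw [hF]; congr 1; push_cast; ring
    rw [h1, h2, Int.fract_neg h0]
    ring
  -- each F is in (0,1)
  have hFpos : ∀ x : ℤ, ¬ ((m:ℤ) ∣ x) → ∀ u : (ZMod m)ˣ, 0 < F x u := by
    intro x hx u
    refine lt_of_le_of_ne (Int.fract_nonneg _) (Ne.symm ?_)
    rw [hF]
    refine fract_ne_zero m ?_
    rw [Int.dvd_neg]
    exact not_dvd_mul_val m hx u
  have hFlt : ∀ (x : ℤ) (u : (ZMod m)ˣ), F x u < 1 := fun x u => Int.fract_lt_one _
  -- α values are 0 or 1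
  have hshort : ∀ σ : (ZMod m)ˣ, α.coeff σ = 0 ∨ α.coeff σ = 1 := by
    intro σ
    obtain ⟨t, ht⟩ := habc
    set u := σ⁻¹ with hu
    set v : ℤ := (((u : ZMod m)).val : ℤ) with hv
    set X : ℤ → ℚ := fun x => ((-(x * v) : ℤ) : ℚ) / (m : ℚ) with hX
    have hm0 : (m:ℚ) ≠ 0 := Nat.cast_ne_zero.2 (NeZero.ne m)
    have hXsum : X a + X b + X c = ((-(t * v) : ℤ) : ℚ) := by
      have htq : (a:ℚ) + b + c = m * t := by exact_mod_cast ht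
      rw [hX]
      push_cast
      rw [← add_div, ← add_div, div_eq_iff hm0]
      linear_combination (-(((((u : ZMod m)).val : ℤ) : ℚ))) * htq
    have hfr : ∀ x : ℤ, F x u = X x - (⌊X x⌋ : ℚ) := fun x => rfl
    have hsum3 : F a u + F b u + F c u =
        ((-(t * v) - ⌊X a⌋ - ⌊X b⌋ - ⌊X c⌋ : ℤ) : ℚ) := by
      rw [hfr, hfr, hfr]
      push_cast at hXsum ⊢
      linarith
    set n : ℤ := -(t * v) - ⌊X a⌋ - ⌊X b⌋ - ⌊X c⌋ with hn
    have hgt : (0:ℚ) < F a u + F b u + F c u := by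
      have := hFpos a ha u; have := hFpos b hb u; have := hFpos c hc u
      linarith
    have hlt : F a u + F b u + F c u < 3 := by
      have := hFlt a u; have := hFlt b u; have := hFlt c u
      linarith
    rw [hsum3] at hgt hlt
    have hn1 : (0:ℤ) < n := by exact_mod_cast hgt
    have hn2 : n < 3 := by exact_mod_cast hlt
    have := happ σ
    rw [← hu] at this
    interval_cases n
    · left; rw [this, hsum3]; norm_num
    · right; rw [this, hsum3]; norm_num
  -- α σ + α (-σ) = 1
  have hnegpair : ∀ σ : (ZMod m)ˣ, α.coeff σ + α.coeff (-σ) = 1 := by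
    intro σ
    have hinv : (-σ)⁻¹ = -(σ⁻¹) := by
      rw [eq_comm, eq_inv_iff_mul_eq_one]
      simp
    rw [happ σ, happ (-σ), hinv]
    have h1 := hpair a ha σ⁻¹
    have h2 := hpair b hb σ⁻¹
    have h3 := hpair c hc σ⁻¹
    linarith
  refine ⟨?_, ?_⟩
  · -- the product identity
    ext σ
    rw [add_mul, one_mul, MonoidAlgebra.coeff_add, Finsupp.add_apply,
      MonoidAlgebra.coeff_single_mul_apply α (1:ℚ) (-1 : (ZMod m)ˣ) σ, one_mul, hN]
    have hinv : (-1 : (ZMod m)ˣ)⁻¹ * σ = -σ := by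
      have : (-1 : (ZMod m)ˣ)⁻¹ = -1 := by
        rw [eq_comm, eq_inv_iff_mul_eq_one]; simp
      rw [this]; simp
    rw [hinv]
    exact hnegpair σ
  · -- counting
    set S0 := Finset.univ.filter (fun σ : (ZMod m)ˣ => α.coeff σ = 0) with hS0
    set S1 := Finset.univ.filter (fun σ : (ZMod m)ˣ => α.coeff σ = 1) with hS1
    have hcards : S0.card = S1.card := by
      refine Finset.card_bij' (fun σ _ => -σ) (fun σ _ => -σ) ?_ ?_ ?_ ?_
      · intro σ hσ
        rw [hS0, Finset.mem_filter] at hσ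
        rw [hS1, Finset.mem_filter]
        have := hnegpair σ
        exact ⟨Finset.mem_univ _, by linarith [hσ.2]⟩
      · intro σ hσ
        rw [hS1, Finset.mem_filter] at hσ
        rw [hS0, Finset.mem_filter]
        have := hnegpair σ
        exact ⟨Finset.mem_univ _, by linarith [hσ.2]⟩
      · intro σ _; simp
      · intro σ _; simp
    have hsplit : S0.card + S1.card = Fintype.card (ZMod m)ˣ := by
      rw [hS0, hS1]
      have : Finset.univ.filter (fun σ : (ZMod m)ˣ => α.coeff σ = 1)
          = Finset.univ.filter (fun σ : (ZMod m)ˣ => ¬ (α.coeff σ = 0)) := by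
        apply Finset.filter_congr
        intro σ _
        rcases hshort σ with h | h <;> simp [h]
      rw [this, Finset.card_filter_add_card_filter_not, Finset.card_univ]
    constructor
    · omega
    · omega
end

section
/- For positive integers n | m and 0 < b < n, the corestriction map cor_{Q(ζ_m)/Q(ζ_n)} sends θ_n(b) to θ_m(bm/n). -/
open scoped BigOperators

/-- The corestriction map `cor_{Q(ζ_m)/Q(ζ_n)} : ℚ[G_n] → ℚ[G_m]`, sending `τ ∈ G_n`
to the sum of all `σ ∈ G_m` restricting to `τ` (restriction being `ZMod.unitsMap`). -/
noncomputable def cor (n m : ℕ) [NeZero n] [NeZero m] (h : n ∣ m)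
    (x : MonoidAlgebra ℚ (ZMod n)ˣ) : MonoidAlgebra ℚ (ZMod m)ˣ :=
  ∑ σ : (ZMod m)ˣ, MonoidAlgebra.single σ (x.coeff (ZMod.unitsMap h σ))

lemma theta_apply (m : ℕ) [NeZero m] (a : ℤ) (τ : (ZMod m)ˣ) :
    (theta m a).coeff τ = Int.fract ((-(a * (((τ⁻¹ : (ZMod m)ˣ) : ZMod m).val : ℤ)) : ℤ) / (m : ℚ)) := by
  unfold theta
  rw [MonoidAlgebra.coeff_sum, Finset.sum_apply']
  rw [Finset.sum_eq_single τ⁻¹]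
  · simp [MonoidAlgebra.single_apply]
  · intro s _ hs
    rw [MonoidAlgebra.single_apply, if_neg]
    intro e
    exact hs (inv_eq_iff_eq_inv.mp e)
  · intro hh; exact absurd (Finset.mem_univ _) hh

lemma frac_key (n k b v : ℕ) (hn : 0 < n) (hk : 0 < k) :
    Int.fract ((-((b:ℤ) * ((v % n : ℕ) : ℤ)) : ℤ) / (n : ℚ)) =
    Int.fract ((-(((b * k : ℕ) : ℤ) * (v : ℤ)) : ℤ) / ((n * k : ℕ) : ℚ)) := by
  have hn' : (n:ℚ) ≠ 0 := by positivity
  have hk' : (k:ℚ) ≠ 0 := by positivity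
  have h2 : ((-(((b * k : ℕ) : ℤ) * (v : ℤ)) : ℤ) / ((n * k : ℕ) : ℚ))
      = (-((b:ℚ) * v)) / n := by
    push_cast
    field_simp
  set q := v % n with hq
  set d := v / n with hd
  have hv : (v:ℚ) = q + n * d := by exact_mod_cast (Nat.mod_add_div v n).symm
  have h3 : ((-((b:ℤ) * ((q : ℕ) : ℤ)) : ℤ) / (n : ℚ))
      = (-((b:ℚ) * v)) / n + ((b * d : ℕ) : ℤ) := by
    push_cast
    rw [hv]
    field_simp
    ring
  rw [h2, h3, Int.fract_add_intCast]

lemma val_unitsMap (n m : ℕ) [NeZero n] [NeZero m] (h : n ∣ m) (τ : (ZMod m)ˣ) :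
    ((ZMod.unitsMap h τ : ZMod n)).val = ((τ : ZMod m)).val % n := by
  have : ((ZMod.unitsMap h τ : ZMod n)) = (((τ : ZMod m).val : ℕ) : ZMod n) := by
    simp [ZMod.unitsMap, ZMod.castHom_apply, ZMod.natCast_val]
  rw [this, ZMod.val_natCast]

theorem stmt9 (n m : ℕ) [NeZero n] [NeZero m] (h : n ∣ m) (b : ℕ)
    (hb0 : 0 < b) (hbn : b < n) :
    cor n m h (theta n (b : ℤ)) = theta m ((b * (m / n) : ℕ) : ℤ) := by
  obtain ⟨k, hk⟩ := h
  have hn0 : 0 < n := Nat.pos_of_ne_zero (NeZero.ne n)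
  have hm0 : 0 < m := Nat.pos_of_ne_zero (NeZero.ne m)
  have hk0 : 0 < k := by
    rcases Nat.eq_zero_or_pos k with h0 | h0
    · subst h0; rw [Nat.mul_zero] at hk; omega
    · exact h0
  have hmn : m / n = k := by rw [hk, Nat.mul_div_cancel_left k hn0]
  have hR : theta m ((b * (m / n) : ℕ) : ℤ) = ∑ σ : (ZMod m)ˣ, MonoidAlgebra.single σ
      (Int.fract ((-(((b * (m / n) : ℕ) : ℤ) * (((σ⁻¹ : (ZMod m)ˣ) : ZMod m).val : ℤ)) : ℤ)
        / (m : ℚ))) := by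
    rw [theta]
    exact Fintype.sum_equiv (Equiv.inv _) _ _ (fun s => by simp)
  rw [hR]
  unfold cor
  refine Finset.sum_congr rfl (fun σ _ => ?_)
  congr 1
  rw [theta_apply]
  have hinv : ZMod.unitsMap ⟨k, hk⟩ σ⁻¹ = (ZMod.unitsMap ⟨k, hk⟩ σ)⁻¹ := map_inv _ _
  rw [← hinv, val_unitsMap]
  rw [hmn]
  have := frac_key n k b (((σ⁻¹ : (ZMod m)ˣ) : ZMod m)).val hn0 hk0
  have hmq : (m:ℚ) = ((n*k:ℕ):ℚ) := by rw [hk]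
  rw [hmq]
  exact this
end
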